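/- arXiv:2102.02668 — 2 statements merged into one kernel-verified Lean document; each statement's English description precedes it below -/
import Mathlib

section
/- Let B be an irreducible N×N skeleton matrix with maximum eigenvalue λ and normalized positive left/right eigenvectors l, r with ∑_k l_k r_k = 1. Then for every Markov transition matrix Q associated with the skeleton B (i.e., Q_{k,m} > 0 ⟺ B_{k,m} = 1) with stationary distribution q, the entropy H(Q) = −∑_{k,m} q_k Q_{k,m} log Q_{k,m} satisfies H(Q) ≤ log λ, with equality when Q_{k,m} = (1/λ) B_{k,m} r_m / r_k. -/
private lemma gibbs_pt (a b : ℝ) (ha : 0 ≤ a) (hb : 0 ≤ b) (hab : 0 < a → 0 < b) :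
    a * Real.log b - a * Real.log a ≤ b - a := by
  rcases ha.eq_or_lt with h | h
  · simp [← h]
    exact hb
  · have hb' := hab h
    have h1 : Real.log b - Real.log a = Real.log (b / a) :=
      (Real.log_div hb'.ne' h.ne').symm
    have h2 : Real.log (b / a) ≤ b / a - 1 :=
      Real.log_le_sub_one_of_pos (by positivity)
    have h3 : a * Real.log b - a * Real.log a = a * (Real.log (b / a)) := by
      rw [← h1]; ring
    rw [h3]
    have h4 : a * (Real.log (b / a)) ≤ a * (b / a - 1) :=
      mul_le_mul_of_nonneg_left h2 h.le
    have : a * (b / a - 1) = b - a := by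
      field_simp
    linarith

private lemma aux_sum (N : ℕ) (Q : Matrix (Fin N) (Fin N) ℝ) (q r : Fin N → ℝ) (lam : ℝ)
    (hQrow : ∀ k, ∑ m, Q k m = 1) (hqsum : ∑ k, q k = 1)
    (hstat : ∀ m, ∑ k, q k * Q k m = q m)
    (G : Fin N → Fin N → ℝ)
    (hG : ∀ k m, G k m = q k * Q k m * Real.log (r m) - q k * Q k m * Real.log lam
        - q k * Q k m * Real.log (r k)) :
    ∑ k, ∑ m, G k m = - Real.log lam := by
  have hA : ∑ k, ∑ m, q k * Q k m * Real.log (r m) = ∑ m, q m * Real.log (r m) := by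
    rw [Finset.sum_comm]
    refine Finset.sum_congr rfl fun m _ => ?_
    rw [show (∑ k, q k * Q k m * Real.log (r m)) = (∑ k, q k * Q k m) * Real.log (r m) from
      (Finset.sum_mul ..).symm, hstat m]
  have hB : ∑ k, ∑ m, q k * Q k m * Real.log lam = Real.log lam := by
    have : ∀ k, ∑ m, q k * Q k m * Real.log lam = q k * Real.log lam := by
      intro k
      rw [show (∑ m, q k * Q k m * Real.log lam) = (∑ m, Q k m) * (q k * Real.log lam) from ?_,
        hQrow k, one_mul]
      rw [Finset.sum_mul]
      exact Finset.sum_congr rfl fun m _ => by ring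
    simp only [this, ← Finset.sum_mul, hqsum, one_mul]
  have hC : ∑ k, ∑ m, q k * Q k m * Real.log (r k) = ∑ k, q k * Real.log (r k) := by
    refine Finset.sum_congr rfl fun k _ => ?_
    rw [show (∑ m, q k * Q k m * Real.log (r k)) = (∑ m, Q k m) * (q k * Real.log (r k)) from ?_,
      hQrow k, one_mul]
    rw [Finset.sum_mul]
    exact Finset.sum_congr rfl fun m _ => by ring
  calc ∑ k, ∑ m, G k m
      = ∑ k, ∑ m, (q k * Q k m * Real.log (r m) - q k * Q k m * Real.log lam
          - q k * Q k m * Real.log (r k)) := by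
        exact Finset.sum_congr rfl fun k _ => Finset.sum_congr rfl fun m _ => hG k m
    _ = (∑ k, ∑ m, q k * Q k m * Real.log (r m)) - (∑ k, ∑ m, q k * Q k m * Real.log lam)
          - (∑ k, ∑ m, q k * Q k m * Real.log (r k)) := by
        simp [Finset.sum_sub_distrib]
    _ = - Real.log lam := by rw [hA, hB, hC]; ring

theorem maxent_entropy_bound
    (N : ℕ) (B : Matrix (Fin N) (Fin N) ℝ)
    (hB01 : ∀ k m, B k m = 0 ∨ B k m = 1)
    (hirr : ∀ k m, ∃ t : ℕ, 1 ≤ t ∧ 0 < (B ^ t) k m)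
    (lam : ℝ) (l r : Fin N → ℝ)
    (hlam : 0 < lam)
    (hlpos : ∀ k, 0 < l k) (hrpos : ∀ k, 0 < r k)
    (hleft : Matrix.vecMul l B = lam • l)
    (hright : B.mulVec r = lam • r)
    (hmax : ∀ (μ : ℝ) (v : Fin N → ℝ), v ≠ 0 → B.mulVec v = μ • v → μ ≤ lam)
    (hnorm : ∑ k, l k * r k = 1) :
    (∀ (Q : Matrix (Fin N) (Fin N) ℝ) (q : Fin N → ℝ),
        (∀ k m, 0 ≤ Q k m) →
        (∀ k, ∑ m, Q k m = 1) →
        (∀ k m, 0 < Q k m ↔ B k m = 1) →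
        (∀ k, 0 ≤ q k) → (∑ k, q k = 1) →
        (∀ m, ∑ k, q k * Q k m = q m) →
        -(∑ k, ∑ m, q k * Q k m * Real.log (Q k m)) ≤ Real.log lam) ∧
    (∀ (Q : Matrix (Fin N) (Fin N) ℝ) (q : Fin N → ℝ),
        (∀ k m, Q k m = (1 / lam) * B k m * r m / r k) →
        (∀ k, q k = l k * r k) →
        (∀ m, ∑ k, q k * Q k m = q m) →
        -(∑ k, ∑ m, q k * Q k m * Real.log (Q k m)) = Real.log lam) := by
  -- the reference transition matrix
  set P : Fin N → Fin N → ℝ := fun k m => B k m * r m / (lam * r k) with hP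
  have hBrow : ∀ k, ∑ m, B k m * r m = lam * r k := by
    intro k
    have := congrFun hright k
    simpa [Matrix.mulVec, dotProduct] using this
  have hProw : ∀ k, ∑ m, P k m = 1 := by
    intro k
    rw [show (∑ m, P k m) = (∑ m, B k m * r m) / (lam * r k) from ?_, hBrow k]
    · exact div_self (by have := hrpos k; positivity)
    · rw [Finset.sum_div]
  have hPnonneg : ∀ k m, 0 ≤ P k m := by
    intro k m
    have h1 := hrpos k
    have h2 := hrpos m
    have hB0 : 0 ≤ B k m := by rcases hB01 k m with h | h <;> simp [h]
    show 0 ≤ B k m * r m / (lam * r k)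
    positivity
  have hPlog : ∀ k m, B k m = 1 →
      Real.log (P k m) = Real.log (r m) - Real.log lam - Real.log (r k) := by
    intro k m h
    have hr := hrpos k
    have hr' := hrpos m
    simp only [hP, h, one_mul]
    rw [Real.log_div hr'.ne' (by positivity), Real.log_mul hlam.ne' hr.ne']
    ring
  constructor
  · intro Q q hQ0 hQrow hQsupp hq0 hqsum hstat
    -- key sum for P
    have key : ∑ k, ∑ m, q k * Q k m * Real.log (P k m) = - Real.log lam := by
      refine aux_sum N Q q r lam hQrow hqsum hstat _ fun k m => ?_
      rcases eq_or_lt_of_le (hQ0 k m) with h | h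
      · rw [← h]; ring
      · rw [hPlog k m ((hQsupp k m).1 h)]; ring
    -- Gibbs inequality per row
    have gibbs : ∀ k, ∑ m, Q k m * Real.log (P k m) ≤ ∑ m, Q k m * Real.log (Q k m) := by
      intro k
      have h1 : ∑ m, (Q k m * Real.log (P k m) - Q k m * Real.log (Q k m))
          ≤ ∑ m, (P k m - Q k m) := by
        refine Finset.sum_le_sum fun m _ => ?_
        refine gibbs_pt (Q k m) (P k m) (hQ0 k m) (hPnonneg k m) fun h => ?_
        have hb := (hQsupp k m).1 h
        have hr := hrpos k
        have hr' := hrpos m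
        simp only [hP, hb, one_mul]
        positivity
      rw [Finset.sum_sub_distrib, Finset.sum_sub_distrib, hProw k, hQrow k] at h1
      linarith
    have hineq : ∑ k, ∑ m, q k * Q k m * Real.log (P k m)
        ≤ ∑ k, ∑ m, q k * Q k m * Real.log (Q k m) := by
      refine Finset.sum_le_sum fun k _ => ?_
      have h2 : ∀ (f : Fin N → ℝ), ∑ m, q k * Q k m * f m = q k * ∑ m, Q k m * f m := by
        intro f
        rw [Finset.mul_sum]
        exact Finset.sum_congr rfl fun m _ => by ring
      rw [h2, h2]
      exact mul_le_mul_of_nonneg_left (gibbs k) (hq0 k)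
    rw [key] at hineq
    linarith
  · intro Q q hQdef hqdef hstat
    have hQrow : ∀ k, ∑ k_1, Q k k_1 = 1 := by
      intro k
      have : ∑ m, Q k m = (∑ m, B k m * r m) / (lam * r k) := by
        rw [Finset.sum_div]
        refine Finset.sum_congr rfl fun m _ => ?_
        rw [hQdef k m]
        have h1 := hrpos k
        field_simp
      rw [this, hBrow k]
      have h1 := hrpos k
      field_simp
    have hqsum : ∑ k, q k = 1 := by
      simp only [hqdef]; exact hnorm
    have key : ∑ k, ∑ m, q k * Q k m * Real.log (Q k m) = - Real.log lam := by
      refine aux_sum N Q q r lam hQrow hqsum hstat _ fun k m => ?_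
      rcases hB01 k m with h | h
      · rw [hQdef k m, h]; ring
      · have hQP : Q k m = P k m := by
          rw [hQdef k m]; simp only [hP]
          have h1 := hrpos k
          field_simp
        rw [hQP, hPlog k m h]; ring
    rw [key]
    ring
end

section
/- Let f, g : {1,…,N} → {1,…,n} with indicator matrices X (n×N, X_{i,k}=χ{f(k)=i}) and Y (N×n, Y_{k,j}=χ{g(k)=j}), and set A = XY, B = YX. Let λ be an eigenvalue of B with left eigenvector l and right eigenvector r. Then diag(lY) · A · diag(Xr) = λ² · X · diag(l_1 r_1,…,l_N r_N) · Y, where diag(v) denotes the diagonal matrix with diagonal entries given by the vector v. -/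
theorem diag_sandwich_identity
    (N n : ℕ) (f g : Fin N → Fin n)
    (X : Matrix (Fin n) (Fin N) ℝ) (Y : Matrix (Fin N) (Fin n) ℝ)
    (hX : ∀ i k, X i k = if f k = i then 1 else 0)
    (hY : ∀ k j, Y k j = if g k = j then 1 else 0)
    (A : Matrix (Fin n) (Fin n) ℝ) (B : Matrix (Fin N) (Fin N) ℝ)
    (hA : A = X * Y) (hB : B = Y * X)
    (lam : ℝ) (l r : Fin N → ℝ)
    (hleft : Matrix.vecMul l B = lam • l)
    (hright : B.mulVec r = lam • r) :
    Matrix.diagonal (Matrix.vecMul l Y) * A * Matrix.diagonal (X.mulVec r)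
      = (lam ^ 2) • (X * Matrix.diagonal (fun k => l k * r k) * Y) := by
  have hlY : ∀ m : Fin N, Matrix.vecMul l Y (f m) = lam * l m := by
    intro m
    have h := congrFun hleft m
    rw [hB, ← Matrix.vecMul_vecMul] at h
    simpa [Matrix.vecMul, dotProduct, hX, Finset.sum_ite_eq] using h
  have hXr : ∀ k : Fin N, X.mulVec r (g k) = lam * r k := by
    intro k
    have h := congrFun hright k
    rw [hB, ← Matrix.mulVec_mulVec] at h
    simpa [Matrix.mulVec, dotProduct, hY, Finset.sum_ite_eq] using h
  ext i j
  have hAij : A i j = ∑ k, X i k * Y k j := by rw [hA, Matrix.mul_apply]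
  have hRij : (X * Matrix.diagonal (fun k => l k * r k) * Y) i j
      = ∑ k, X i k * (l k * r k) * Y k j := by
    rw [Matrix.mul_apply]
    refine Finset.sum_congr rfl fun k _ => ?_
    rw [Matrix.mul_diagonal]
  rw [Matrix.mul_diagonal, Matrix.diagonal_mul, Matrix.smul_apply, smul_eq_mul,
    hRij, hAij, Finset.mul_sum, Finset.sum_mul, Finset.mul_sum]
  refine Finset.sum_congr rfl fun k _ => ?_
  rw [hX, hY]
  by_cases h1 : f k = i
  · by_cases h2 : g k = j
    · subst h1; subst h2
      rw [hlY, hXr]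
      simp; ring
    · simp [h2]
  · simp [h1]
end
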